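/- (Generating function for the Specialized Chihara polynomials.) Let μ > 0 and γ, λ, z ∈ ℝ. Then the series Σ_{n=0}^{∞} P_n(λ;μ,γ)·z^n/√([n]_μ!) converges absolutely and equals e^{−z²/2}·( ₀F₁(; μ+1/2; z²(λ²−γ²)/4) + (z(λ−γ)/(2μ+1))·₀F₁(; μ+3/2; z²(λ²−γ²)/4) ), where ₀F₁(; b; x) = Σ_{k=0}^{∞} x^k/((b)_k k!). -/

import Mathlib

noncomputable section

open Real MeasureTheory

namespace MinusOne

/-- The μ-number `[n]_μ = n + (1 - (-1)^n) μ`. -/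
def munum (μ : ℝ) (n : ℕ) : ℝ := n + (1 - (-1 : ℝ) ^ n) * μ

/-- The μ-factorial `[n]_μ! = [1]_μ [2]_μ ⋯ [n]_μ`. -/
def mufact (μ : ℝ) (n : ℕ) : ℝ := ∏ k ∈ Finset.range n, munum μ (k + 1)

/-- Pochhammer symbol `(a)_k = a (a+1) ⋯ (a+k-1)`. -/
def poch (a : ℝ) (k : ℕ) : ℝ := ∏ i ∈ Finset.range k, (a + i)

/-- Laguerre polynomial `L_n^{(α)}(x)`. -/
def laguerre (α : ℝ) (n : ℕ) (x : ℝ) : ℝ :=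
  (poch (α + 1) n / (Nat.factorial n : ℝ)) *
    ∑ k ∈ Finset.range (n + 1),
      poch (-(n : ℝ)) k / (poch (α + 1) k * (Nat.factorial k : ℝ)) * x ^ k

/-- Specialized Chihara polynomials `P_n(x; μ, γ)`. -/
def P (μ γ : ℝ) (n : ℕ) (x : ℝ) : ℝ :=
  if n % 2 = 0 then
    (-1 : ℝ) ^ (n / 2) *
      Real.sqrt ((Nat.factorial (n / 2) : ℝ) * Real.Gamma (μ + 1/2) /
        Real.Gamma (((n / 2 : ℕ) : ℝ) + μ + 1/2)) *
      laguerre (μ - 1/2) (n / 2) ((x ^ 2 - γ ^ 2) / 2)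
  else
    (-1 : ℝ) ^ (n / 2) *
      Real.sqrt ((Nat.factorial (n / 2) : ℝ) * Real.Gamma (μ + 3/2) /
        Real.Gamma (((n / 2 : ℕ) : ℝ) + μ + 3/2)) *
      ((x - γ) / Real.sqrt (2 * μ + 1)) *
      laguerre (μ + 1/2) (n / 2) ((x ^ 2 - γ ^ 2) / 2)

/-- Chihara weight function `w(x; μ, γ)`. -/
def w (μ γ : ℝ) (x : ℝ) : ℝ :=
  Real.sign x * (x + γ) * ((x ^ 2 - γ ^ 2) / 2) ^ (μ - 1/2) *
    Real.exp (-((x ^ 2 - γ ^ 2) / 2))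

/-- The set `F(γ) = (-∞, -|γ|) ∪ (|γ|, ∞)`. -/
def Fset (γ : ℝ) : Set ℝ := Set.Iio (-|γ|) ∪ Set.Ioi (|γ|)

/-- Normalized Chihara weight `W = w / (2 Γ(μ+1/2))`. -/
def Wn (μ γ : ℝ) (x : ℝ) : ℝ := w μ γ x / (2 * Real.Gamma (μ + 1/2))

/-- The measure `W(x; μ, γ) dx` on `F(γ)`. -/
def meas1 (μ γ : ℝ) : Measure ℝ :=
  (volume.restrict (Fset γ)).withDensity fun x => ENNReal.ofReal (Wn μ γ x)

/-- The region `G = {|λ2| > |λ1| > |c|}`. -/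
def Gset (c : ℝ) : Set (ℝ × ℝ) := {p : ℝ × ℝ | |c| < |p.1| ∧ |p.1| < |p.2|}

/-- The measure `W(λ1; μ1, c ε1) W(λ2; μ2, λ1 ε2) dλ1 dλ2` on `G`. -/
def meas2 (μ1 μ2 c ε1 ε2 : ℝ) : Measure (ℝ × ℝ) :=
  ((volume : Measure (ℝ × ℝ)).restrict (Gset c)).withDensity
    fun p => ENNReal.ofReal (Wn μ1 (c * ε1) p.1 * Wn μ2 (p.1 * ε2) p.2)

/-- The region `G⁽³⁾ = {|λ3| > |λ2| > |λ1| > |c|}`. -/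
def G3set (c : ℝ) : Set (ℝ × ℝ × ℝ) :=
  {p : ℝ × ℝ × ℝ | |c| < |p.1| ∧ |p.1| < |p.2.1| ∧ |p.2.1| < |p.2.2|}

/-- The three-variable measure on `G⁽³⁾`. -/
def meas3 (μ1 μ2 μ3 c ε1 ε2 ε3 : ℝ) : Measure (ℝ × ℝ × ℝ) :=
  ((volume : Measure (ℝ × ℝ × ℝ)).restrict (G3set c)).withDensity
    fun p => ENNReal.ofReal
      (Wn μ1 (c * ε1) p.1 * Wn μ2 (p.1 * ε2) p.2.1 * Wn μ3 (p.2.1 * ε3) p.2.2)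

/-- Big −1 Jacobi polynomials `J_n(x; a, b, c)`. -/
def J (a b c : ℝ) (n : ℕ) (x : ℝ) : ℝ :=
  if n % 2 = 0 then
    (∑ k ∈ Finset.range (n + 1),
       poch (-(n : ℝ) / 2) k * poch (((n : ℝ) + a + b + 2) / 2) k /
         (poch ((a + 1) / 2) k * (Nat.factorial k : ℝ)) * ((1 - x ^ 2) / (1 - c ^ 2)) ^ k)
    + ((n : ℝ) * (1 - x) / ((1 + c) * (a + 1))) *
      ∑ k ∈ Finset.range (n + 1),
        poch (1 - (n : ℝ) / 2) k * poch (((n : ℝ) + a + b + 2) / 2) k /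
          (poch ((a + 3) / 2) k * (Nat.factorial k : ℝ)) * ((1 - x ^ 2) / (1 - c ^ 2)) ^ k
  else
    (∑ k ∈ Finset.range (n + 1),
       poch (-((n : ℝ) - 1) / 2) k * poch (((n : ℝ) + a + b + 1) / 2) k /
         (poch ((a + 1) / 2) k * (Nat.factorial k : ℝ)) * ((1 - x ^ 2) / (1 - c ^ 2)) ^ k)
    - (((n : ℝ) + a + b + 1) * (1 - x) / ((1 + c) * (a + 1))) *
      ∑ k ∈ Finset.range (n + 1),
        poch (-((n : ℝ) - 1) / 2) k * poch (((n : ℝ) + a + b + 3) / 2) k /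
          (poch ((a + 3) / 2) k * (Nat.factorial k : ℝ)) * ((1 - x ^ 2) / (1 - c ^ 2)) ^ k

/-- Recurrence coefficient `A_n` for the Big −1 Jacobi polynomials. -/
def JA (a b c : ℝ) (n : ℕ) : ℝ :=
  if n % 2 = 0 then ((n : ℝ) + a + 1) * (c + 1) / (2 * n + a + b + 2)
  else (1 - c) * ((n : ℝ) + a + b + 1) / (2 * n + a + b + 2)

/-- Recurrence coefficient `C_n` for the Big −1 Jacobi polynomials. -/
def JC (a b c : ℝ) (n : ℕ) : ℝ :=
  if n % 2 = 0 then (n : ℝ) * (1 - c) / (2 * n + a + b)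
  else ((n : ℝ) + b) * (1 + c) / (2 * n + a + b)

/-- Big −1 Jacobi weight `ω(x; a, b, c)`. -/
def Jweight (a b c : ℝ) (x : ℝ) : ℝ :=
  Real.sign x * (1 + x) * (x - c) * (x ^ 2 - c ^ 2) ^ ((b - 1) / 2) *
    (1 - x ^ 2) ^ ((a - 1) / 2)

/-- Big −1 Jacobi normalization `h_n(a, b)`. -/
def hJ (a b : ℝ) (n : ℕ) : ℝ :=
  if n % 2 = 0 then
    2 * Real.Gamma (((n : ℝ) + b + 1) / 2) * Real.Gamma (((n : ℝ) + a + 3) / 2) *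
      (Nat.factorial (n / 2) : ℝ) /
      (((n : ℝ) + a + 1) * Real.Gamma (((n : ℝ) + a + b + 2) / 2) * (poch ((a + 1) / 2) (n / 2)) ^ 2)
  else
    ((n : ℝ) + a + b + 1) * Real.Gamma (((n : ℝ) + b + 2) / 2) * Real.Gamma (((n : ℝ) + a + 2) / 2) *
      (Nat.factorial ((n - 1) / 2) : ℝ) /
      (2 * Real.Gamma (((n : ℝ) + a + b + 3) / 2) * (poch ((a + 1) / 2) ((n + 1) / 2)) ^ 2)

/-- Coupling factor `K_j(y; ν2, ν1; t, σ)`. -/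
def K (ν2 ν1 t σ : ℝ) (j : ℕ) (y : ℝ) : ℝ :=
  Real.sqrt (((y ^ 2 - t ^ 2) / 2) ^ j * ((y - t * σ) / (y - (-1 : ℝ) ^ j * t * σ)) *
    Real.Gamma (ν1 + 1/2) * Real.Gamma (ν2 + 1/2) /
    (Real.Gamma (ν1 + ν2 + j + 1) * hJ (2 * ν2) (2 * ν1) j))

/-- Dual −1 Hahn polynomials `R_n(x; η, ξ, N)`. -/
def Rdual (η ξ : ℝ) (N : ℕ) (n : ℕ) (x : ℝ) : ℝ :=
  if N % 2 = 0 then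
    if n % 2 = 0 then
      (16 : ℝ) ^ (n / 2) * poch (-(N : ℝ) / 2) (n / 2) * poch ((1 - 2 * η - N) / 2) (n / 2) *
        ∑ k ∈ Finset.range (n / 2 + 1),
          poch (-((n : ℝ) / 2)) k * poch (-(η + ξ + N) / 2 + (x + 1) / 4) k *
            poch (-(η + ξ + N) / 2 - (x + 1) / 4) k /
            (poch (-(N : ℝ) / 2) k * poch ((1 - 2 * η - N) / 2) k * (Nat.factorial k : ℝ))
    else
      (16 : ℝ) ^ (n / 2) * poch (1 - (N : ℝ) / 2) (n / 2) * poch ((1 - 2 * η - N) / 2) (n / 2) *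
        (x + 2 * η + 2 * ξ + 1) *
        ∑ k ∈ Finset.range (n / 2 + 1),
          poch (-(((n : ℝ) - 1) / 2)) k * poch (-(η + ξ + N) / 2 + (x + 1) / 4) k *
            poch (-(η + ξ + N) / 2 - (x + 1) / 4) k /
            (poch (1 - (N : ℝ) / 2) k * poch ((1 - 2 * η - N) / 2) k * (Nat.factorial k : ℝ))
  else
    if n % 2 = 0 then
      (16 : ℝ) ^ (n / 2) * poch ((1 - (N : ℝ)) / 2) (n / 2) * poch ((2 * ξ + 1) / 2) (n / 2) *
        ∑ k ∈ Finset.range (n / 2 + 1),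
          poch (-((n : ℝ) / 2)) k * poch ((η + ξ + 1) / 2 + (x + 1) / 4) k *
            poch ((η + ξ + 1) / 2 - (x + 1) / 4) k /
            (poch ((1 - (N : ℝ)) / 2) k * poch ((2 * ξ + 1) / 2) k * (Nat.factorial k : ℝ))
    else
      (16 : ℝ) ^ (n / 2) * poch ((1 - (N : ℝ)) / 2) (n / 2) * poch ((2 * ξ + 3) / 2) (n / 2) *
        (x + 2 * ξ - 2 * η + 1) *
        ∑ k ∈ Finset.range (n / 2 + 1),
          poch (-(((n : ℝ) - 1) / 2)) k * poch ((η + ξ + 1) / 2 + (x + 1) / 4) k *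
            poch ((η + ξ + 1) / 2 - (x + 1) / 4) k /
            (poch ((1 - (N : ℝ)) / 2) k * poch ((2 * ξ + 3) / 2) k * (Nat.factorial k : ℝ))

/-- Grid points `y_s` for the dual −1 Hahn polynomials. -/
def ygrid (η ξ : ℝ) (N : ℕ) (s : ℕ) : ℝ :=
  if N % 2 = 0 then (-1 : ℝ) ^ s * (2 * s - 2 * η - 2 * ξ - 2 * N - 1)
  else (-1 : ℝ) ^ s * (2 * s + 2 * η + 2 * ξ + 1)

/-- Weights `ϖ_s(η, ξ, N)` for the dual −1 Hahn polynomials. -/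
def varpi (η ξ : ℝ) (N : ℕ) (s : ℕ) : ℝ :=
  if N % 2 = 0 then
    if s % 2 = 0 then
      (-1 : ℝ) ^ (s / 2) * poch (-(N : ℝ) / 2) (s / 2) * poch (-(N : ℝ) / 2 - η + 1/2) (s / 2) *
        poch (-(N : ℝ) - η - ξ) (s / 2) /
        ((Nat.factorial (s / 2) : ℝ) * poch (-(N : ℝ) / 2 - ξ + 1/2) (s / 2) *
          poch (-(N : ℝ) / 2 - η - ξ) (s / 2))
    else
      (-1 : ℝ) ^ (s / 2) * poch (-(N : ℝ) / 2) (s / 2 + 1) * poch (-(N : ℝ) / 2 - η + 1/2) (s / 2) *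
        poch (-(N : ℝ) - η - ξ) (s / 2) /
        ((Nat.factorial (s / 2) : ℝ) * poch (-(N : ℝ) / 2 - ξ + 1/2) (s / 2) *
          poch (-(N : ℝ) / 2 - η - ξ) (s / 2 + 1))
  else
    if s % 2 = 0 then
      (-1 : ℝ) ^ (s / 2) * poch ((1 - (N : ℝ)) / 2) (s / 2) * poch (ξ + 1/2) (s / 2) *
        poch (η + ξ + 1) (s / 2) /
        ((Nat.factorial (s / 2) : ℝ) * poch (η + 1/2) (s / 2) *
          poch (((N : ℝ) + 3) / 2 + η + ξ) (s / 2))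
    else
      (-1 : ℝ) ^ (s / 2) * poch ((1 - (N : ℝ)) / 2) (s / 2) * poch (ξ + 1/2) (s / 2 + 1) *
        poch (η + ξ + 1) (s / 2) /
        ((Nat.factorial (s / 2) : ℝ) * poch (η + 1/2) (s / 2 + 1) *
          poch (((N : ℝ) + 3) / 2 + η + ξ) (s / 2))

/-- Normalizations `ν_n(η, ξ, N)` for the dual −1 Hahn polynomials. -/
def nuDual (η ξ : ℝ) (N : ℕ) (n : ℕ) : ℝ :=
  if N % 2 = 0 then
    if n % 2 = 0 then
      (16 : ℝ) ^ n * (Nat.factorial (n / 2) : ℝ) * poch (-(N : ℝ) / 2) (n / 2) *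
        poch (ξ + 1/2) (n / 2) * poch ((-(N : ℝ) - 2 * η + 1) / 2) (n / 2) *
        (poch (-(N : ℝ) - η - ξ) (N / 2) / poch ((-(N : ℝ) - 2 * ξ + 1) / 2) (N / 2))
    else
      -(16 : ℝ) ^ n * (Nat.factorial (n / 2) : ℝ) * poch (-(N : ℝ) / 2) (n / 2 + 1) *
        poch (ξ + 1/2) (n / 2 + 1) * poch ((-(N : ℝ) - 2 * η + 1) / 2) (n / 2) *
        (poch (-(N : ℝ) - η - ξ) (N / 2) / poch ((-(N : ℝ) - 2 * ξ + 1) / 2) (N / 2))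
  else
    if n % 2 = 0 then
      (16 : ℝ) ^ n * (Nat.factorial (n / 2) : ℝ) * poch ((1 - (N : ℝ)) / 2) (n / 2) *
        poch (ξ + 1/2) (n / 2) * poch (-(N : ℝ) / 2 - η) (n / 2) *
        (poch (η + ξ + 1) ((N + 1) / 2) / poch (η + 1/2) ((N + 1) / 2))
    else
      -(16 : ℝ) ^ n * (Nat.factorial (n / 2) : ℝ) * poch ((1 - (N : ℝ)) / 2) (n / 2) *
        poch (ξ + 1/2) (n / 2 + 1) * poch (-(N : ℝ) / 2 - η) (n / 2 + 1) *
        (poch (η + ξ + 1) ((N + 1) / 2) / poch (η + 1/2) ((N + 1) / 2))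

/-- The points `z_s = (-1)^{s+N+1} (2s + 2η + 2ξ + 1)`. -/
def zgrid (η ξ : ℝ) (N : ℕ) (s : ℕ) : ℝ :=
  (-1 : ℝ) ^ (s + N + 1) * (2 * s + 2 * η + 2 * ξ + 1)

/-- The reversed weights `ρ_s(η, ξ, N)`. -/
def rhoDual (η ξ : ℝ) (N : ℕ) (s : ℕ) : ℝ :=
  if N % 2 = 0 then varpi η ξ N (N - s) else varpi η ξ N s

/-- The quantity `ν_0(η, ξ, N)`. -/
def nu0 (η ξ : ℝ) (N : ℕ) : ℝ :=
  if N % 2 = 0 then poch (-(N : ℝ) - η - ξ) (N / 2) / poch ((-(N : ℝ) - 2 * ξ + 1) / 2) (N / 2)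
  else poch (η + ξ + 1) ((N + 1) / 2) / poch (η + 1/2) ((N + 1) / 2)

/-- Bannai–Ito recurrence coefficient `A_n`. -/
def BIA (ρ1 ρ2 r1 r2 : ℝ) (n : ℕ) : ℝ :=
  if n % 2 = 0 then
    ((n : ℝ) + 2 * ρ1 - 2 * r1 + 1) * ((n : ℝ) + 2 * ρ1 - 2 * r2 + 1) /
      (4 * ((n : ℝ) + (ρ1 + ρ2 - r1 - r2) + 1))
  else
    ((n : ℝ) + 2 * (ρ1 + ρ2 - r1 - r2) + 1) * ((n : ℝ) + 2 * ρ1 + 2 * ρ2 + 1) /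
      (4 * ((n : ℝ) + (ρ1 + ρ2 - r1 - r2) + 1))

/-- Bannai–Ito recurrence coefficient `C_n`. -/
def BIC (ρ1 ρ2 r1 r2 : ℝ) (n : ℕ) : ℝ :=
  if n % 2 = 0 then
    -((n : ℝ) * ((n : ℝ) - 2 * r1 - 2 * r2)) / (4 * ((n : ℝ) + (ρ1 + ρ2 - r1 - r2)))
  else
    -(((n : ℝ) + 2 * ρ2 - 2 * r2) * ((n : ℝ) + 2 * ρ2 - 2 * r1)) /
      (4 * ((n : ℝ) + (ρ1 + ρ2 - r1 - r2)))

/-- Monic Bannai–Ito polynomials, defined by the three-term recurrence. -/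
def BI (ρ1 ρ2 r1 r2 : ℝ) : ℕ → ℝ → ℝ
  | 0 => fun _ => 1
  | 1 => fun x => x - (ρ1 - BIA ρ1 ρ2 r1 r2 0 - BIC ρ1 ρ2 r1 r2 0)
  | (n + 2) => fun x =>
      (x - (ρ1 - BIA ρ1 ρ2 r1 r2 (n + 1) - BIC ρ1 ρ2 r1 r2 (n + 1))) * BI ρ1 ρ2 r1 r2 (n + 1) x
      - BIA ρ1 ρ2 r1 r2 n * BIC ρ1 ρ2 r1 r2 (n + 1) * BI ρ1 ρ2 r1 r2 n x

/-- Bannai–Ito normalization `η_n`. -/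
def BIeta (ρ1 ρ2 r1 r2 : ℝ) (n : ℕ) : ℝ :=
  (-1 : ℝ) ^ n * poch (ρ1 - r1 + 1/2) (n / 2 + n % 2) * poch (ρ2 - r1 + 1/2) (n / 2 + n % 2) *
    poch (1 - r1 - r2) (n / 2) /
    poch (((n / 2 : ℕ) : ℝ) + (ρ1 + ρ2 - r1 - r2) + 1) (n / 2 + n % 2)

/-- Bannai–Ito grid points `x_k`. -/
def BIx (ρ1 : ℝ) (k : ℕ) : ℝ := (-1 : ℝ) ^ k * ((k : ℝ) / 2 + ρ1 + 1/4) - 1/4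

/-- Bannai–Ito weights `w_k`. -/
def BIw (ρ1 ρ2 r1 r2 : ℝ) (k : ℕ) : ℝ :=
  ((-1 : ℝ) ^ k / (Nat.factorial (k / 2) : ℝ)) *
    (poch (ρ1 - r1 + 1/2) (k / 2 + k % 2) * poch (ρ1 - r2 + 1/2) (k / 2 + k % 2) *
      poch (ρ1 + ρ2 + 1) (k / 2) * poch (2 * ρ1 + 1) (k / 2)) /
    (poch (ρ1 + r1 + 1/2) (k / 2 + k % 2) * poch (ρ1 + r2 + 1/2) (k / 2 + k % 2) *
      poch (ρ1 - ρ2 + 1) (k / 2))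

/-- Bannai–Ito normalization `h_n` for even truncation parameter `N = 2 Ne`. -/
def BIhEven (ρ1 ρ2 r1 r2 : ℝ) (Ne : ℕ) (n : ℕ) : ℝ :=
  (Nat.factorial (n / 2) : ℝ) * (Nat.factorial Ne : ℝ) * poch (1 + 2 * ρ1) Ne *
    poch (1 + ρ1 + ρ2) (n / 2) *
    poch (1 + ((n / 2 : ℕ) : ℝ) + (ρ1 + ρ2 - r1 - r2)) (Ne - n / 2) *
    poch (1/2 + ρ1 - r1) (n / 2 + n % 2) * poch (1/2 + ρ2 - r1) (n / 2 + n % 2) /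
  ((Nat.factorial (Ne - n / 2 - n % 2) : ℝ) * poch (1/2 + ρ1 + r1) (Ne - n / 2) *
    poch (1/2 + ((n / 2 : ℕ) : ℝ) + ((n % 2 : ℕ) : ℝ) + ρ2 - r2) (Ne - n / 2 - n % 2) *
    (poch (1 + (n : ℝ) + (ρ1 + ρ2 - r1 - r2)) (n / 2 + n % 2)) ^ 2)

/-- Bannai–Ito normalization `h_n` for odd truncation parameter `N = 2 Ne + 1`. -/
def BIhOdd (ρ1 ρ2 r1 r2 : ℝ) (Ne : ℕ) (n : ℕ) : ℝ :=
  (Nat.factorial (n / 2) : ℝ) * (Nat.factorial Ne : ℝ) * poch (1 + 2 * ρ1) (Ne + 1) *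
    poch (1 - r1 - r2) (n / 2) *
    poch (1 + ((n / 2 : ℕ) : ℝ) + (ρ1 + ρ2 - r1 - r2)) (Ne + 1 - n / 2) *
    poch (1/2 + ρ1 - r1) (n / 2 + n % 2) * poch (1/2 + ρ1 - r2) (n / 2 + n % 2) /
  ((Nat.factorial (Ne - n / 2) : ℝ) * poch (1/2 + ρ1 + r1) (Ne + 1 - n / 2 - n % 2) *
    poch (1/2 + ((n / 2 : ℕ) : ℝ) + ((n % 2 : ℕ) : ℝ) + ρ2 - r2) (Ne + 1 - n / 2 - n % 2) *
    (poch (1 + (n : ℝ) + (ρ1 + ρ2 - r1 - r2)) (n / 2 + n % 2)) ^ 2)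

/-- Bannai–Ito normalization `h_n` with truncation parameter `N`. -/
def BIh (ρ1 ρ2 r1 r2 : ℝ) (N : ℕ) (n : ℕ) : ℝ :=
  if N % 2 = 0 then BIhEven ρ1 ρ2 r1 r2 (N / 2) n else BIhOdd ρ1 ρ2 r1 r2 (N / 2) n

/-- Phase `φ(n1, n2, j)` of the Clebsch–Gordan coefficients. -/
def cgPhi (n1 n2 j : ℕ) : ℕ := n1 * (n1 - 1) / 2 + j * (j + 1) / 2 + n1 * (n1 + n2 + 1)

/-- Clebsch–Gordan coefficients `C^{N,j}_{n1,n2}` of `osp(1|2)`. -/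
def CG (μ1 μ2 ε2 : ℝ) (n1 n2 j : ℕ) : ℝ :=
  (-1 : ℝ) ^ (cgPhi n1 n2 j) * (ε2 / 2) ^ n1 *
    Real.sqrt (mufact μ2 n2 * rhoDual μ2 μ1 (n1 + n2) j /
      (mufact μ1 n1 * mufact μ2 (n1 + n2) * nu0 μ2 μ1 (n1 + n2))) *
    Rdual μ2 μ1 (n1 + n2) n1 (zgrid μ2 μ1 (n1 + n2) j)

/-- Phase `φ` of the Racah coefficients. -/
def racahPhi (j12 j23 j123 : ℕ) : ℕ :=
  j123 * ((j12 - 1) * j12 / 2) + (j123 + 1) * (j23 + (j12 + 1) * j12 / 2)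

/-- Racah coefficients of `osp(1|2)` in terms of Bannai–Ito polynomials. -/
def racah (μ1 μ2 μ3 ε3 : ℝ) (j12 j23 j123 : ℕ) : ℝ :=
  (-1 : ℝ) ^ (racahPhi j12 j23 j123) * ε3 ^ j12 *
    Real.sqrt (BIw ((μ2 + μ3) / 2) ((μ1 + (-1 : ℝ) ^ j123 * (μ1 + μ2 + μ3 + 1 + j123)) / 2)
        ((μ3 - μ2) / 2) (((-1 : ℝ) ^ j123 * (μ1 + μ2 + μ3 + 1 + j123) - μ1) / 2) j23 /
      BIh ((μ2 + μ3) / 2) ((μ1 + (-1 : ℝ) ^ j123 * (μ1 + μ2 + μ3 + 1 + j123)) / 2)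
        ((μ3 - μ2) / 2) (((-1 : ℝ) ^ j123 * (μ1 + μ2 + μ3 + 1 + j123) - μ1) / 2) j123 j12) *
    BI ((μ2 + μ3) / 2) ((μ1 + (-1 : ℝ) ^ j123 * (μ1 + μ2 + μ3 + 1 + j123)) / 2)
      ((μ3 - μ2) / 2) (((-1 : ℝ) ^ j123 * (μ1 + μ2 + μ3 + 1 + j123) - μ1) / 2) j12
      (BIx ((μ2 + μ3) / 2) j23)

/-- The hypergeometric function `₀F₁(; b; x)`. -/
def hyp0F1 (b x : ℝ) : ℝ := ∑' k : ℕ, x ^ k / (poch b k * (Nat.factorial k : ℝ))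

/-- Truncated Gauss hypergeometric sum `₂F₁` (used for terminating series). -/
def hyp2F1fin (m : ℕ) (a1 a2 b x : ℝ) : ℝ :=
  ∑ k ∈ Finset.range m, poch a1 k * poch a2 k / (poch b k * (Nat.factorial k : ℝ)) * x ^ k

/-- The function `f_e(j)` appearing in the bilinear generating function. -/
def fe (μ1 μ2 ε2 z1 z2 : ℝ) (j : ℕ) : ℝ :=
  (-1 : ℝ) ^ (j / 2 + j % 2) * (z2 ^ j / Real.sqrt (mufact μ2 j)) *
    Real.sqrt (poch (1/2 + μ1) (j / 2 + j % 2) /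
      poch (((j / 2 : ℕ) : ℝ) + ((j % 2 : ℕ) : ℝ) + 1 + μ1 + μ2) (j / 2 + j % 2)) *
    (hyp2F1fin (j + 1) (-((j / 2 : ℕ) : ℝ)) (1/2 - ((j / 2 : ℕ) : ℝ) - ((j % 2 : ℕ) : ℝ) - μ2)
        (1/2 + μ1) (-(z1 / z2) ^ 2)
      + ((-1 : ℝ) ^ (j % 2) * z1 * ((j : ℝ) + 2 * μ2 * ((j % 2 : ℕ) : ℝ)) /
          (z2 * ε2 * (1 + 2 * μ1))) *
        hyp2F1fin (j + 1) (1 - ((j / 2 : ℕ) : ℝ) - ((j % 2 : ℕ) : ℝ)) (1/2 - ((j / 2 : ℕ) : ℝ) - μ2)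
          (3/2 + μ1) (-(z1 / z2) ^ 2))

/-- The function `f_o(j)` appearing in the bilinear generating function. -/
def fo (μ1 μ2 ε2 z1 z2 : ℝ) (j : ℕ) : ℝ :=
  (-1 : ℝ) ^ (j / 2 + j % 2) * (Real.sqrt ((z1 / z2) ^ 2 + 1))⁻¹ *
    (z2 ^ j / Real.sqrt (mufact μ2 j)) *
    Real.sqrt (poch (1/2 + μ1) (j / 2 + j % 2) /
      poch (((j / 2 : ℕ) : ℝ) + ((j % 2 : ℕ) : ℝ) + 1 + μ1 + μ2) (j / 2 + j % 2)) *
    (hyp2F1fin (j + 1) (-((j / 2 : ℕ) : ℝ) - ((j % 2 : ℕ) : ℝ)) (-1/2 - ((j / 2 : ℕ) : ℝ) - μ2)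
        (1/2 + μ1) (-(z1 / z2) ^ 2)
      + ((-1 : ℝ) ^ (j % 2) * z1 * ((j : ℝ) + 1 + 2 * μ1 + 2 * μ2 * ((j % 2 : ℕ) : ℝ)) /
          (z2 * ε2 * (1 + 2 * μ1))) *
        hyp2F1fin (j + 1) (-((j / 2 : ℕ) : ℝ)) (1/2 - ((j / 2 : ℕ) : ℝ) - ((j % 2 : ℕ) : ℝ) - μ2)
          (3/2 + μ1) (-(z1 / z2) ^ 2))

/-- Dunkl realization: `J₊`. -/
def Jp (f : ℝ → ℝ) : ℝ → ℝ := fun z => z * f z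

/-- Dunkl realization: `J₋` (the Dunkl derivative). -/
def Jm (μ : ℝ) (f : ℝ → ℝ) : ℝ → ℝ := fun z => deriv f z + (μ / z) * (f z - f (-z))

/-- Dunkl realization: `J₀`. -/
def J0op (μ : ℝ) (f : ℝ → ℝ) : ℝ → ℝ := fun z => z * deriv f z + (μ + 1/2) * f z

/-- Reflection operator `R`. -/
def Rop (f : ℝ → ℝ) : ℝ → ℝ := fun z => f (-z)

/-!
Splitting by parity, the normalisations of `P_n` and `√([n]_μ!)` cancel to
`P_{2m} z^{2m}/√([2m]_μ!) = t^m L_m^{(b-1)}(x)/(b)_m` with `b = μ + 1/2`, `t = -z²/2`,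
`x = (λ² - γ²)/2`, and the odd terms are `z(λ-γ)/(2μ+1)` times the same expression with
`b = μ + 3/2`. The explicit sum for `L_m^{(b-1)}` exhibits `t^m L_m^{(b-1)}(x)/(b)_m` as the
`m`-th Cauchy product coefficient of `₀F₁(; b; -xt)` and `e^t`, and both factors converge
absolutely.
-/

lemma poch_eq_eval_ascPochhammer (a : ℝ) (k : ℕ) : poch a k = (ascPochhammer ℝ k).eval a := by
  induction k with
  | zero => simp [poch]
  | succ k ih => rw [poch, Finset.prod_range_succ, ← poch, ih, ascPochhammer_succ_eval]

lemma poch_pos {a : ℝ} (ha : 0 < a) (k : ℕ) : 0 < poch a k := by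
  rw [poch_eq_eval_ascPochhammer]
  exact ascPochhammer_pos k a ha

lemma poch_succ (a : ℝ) (k : ℕ) : poch a (k + 1) = poch a k * (a + k) := by
  rw [poch, Finset.prod_range_succ, ← poch]

lemma poch_succ_left (a : ℝ) (k : ℕ) : poch a (k + 1) = a * poch (a + 1) k := by
  simp only [poch_eq_eval_ascPochhammer, ascPochhammer_succ_left, Polynomial.eval_mul,
    Polynomial.eval_X, Polynomial.eval_comp, Polynomial.eval_add, Polynomial.eval_one]

lemma one_le_poch {a : ℝ} (ha : 1 ≤ a) (k : ℕ) : 1 ≤ poch a k := by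
  induction k with
  | zero => simp [poch]
  | succ k ih =>
    rw [poch_succ]
    exact one_le_mul_of_one_le_of_one_le ih (by linarith [(k.cast_nonneg : (0 : ℝ) ≤ k)])

lemma min_one_le_poch {a : ℝ} (ha : 0 < a) (k : ℕ) : min a 1 ≤ poch a k := by
  cases k with
  | zero => simp [poch]
  | succ k =>
    rw [poch_succ_left]
    exact (min_le_left a 1).trans
      (le_mul_of_one_le_right ha.le (one_le_poch (by linarith) k))

lemma poch_neg_natCast_mul_factorial {m k : ℕ} (hk : k ≤ m) :
    poch (-(m : ℝ)) k * (m - k).factorial = (-1) ^ k * m.factorial := by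
  rw [poch_eq_eval_ascPochhammer, ascPochhammer_eval_neg_eq_descPochhammer,
    descPochhammer_eval_eq_descFactorial, ← Nat.factorial_mul_descFactorial hk]
  push_cast
  ring

lemma Gamma_nat_add_eq_poch_mul {b : ℝ} (hb : 0 < b) (m : ℕ) :
    Real.Gamma (m + b) = poch b m * Real.Gamma b := by
  induction m with
  | zero => simp [poch]
  | succ m ih =>
    have hne : (m : ℝ) + b ≠ 0 := by positivity
    rw [Nat.cast_succ, add_right_comm, Real.Gamma_add_one hne, ih, poch_succ]
    ring

lemma sqrt_factorial_mul_Gamma_div {b : ℝ} (hb : 0 < b) (m : ℕ) :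
    √(m.factorial * Real.Gamma b / Real.Gamma (m + b))
      = √(m.factorial * poch b m) / poch b m := by
  have hp := poch_pos hb m
  rw [Gamma_nat_add_eq_poch_mul hb, mul_div_mul_right _ _ (Real.Gamma_pos_of_pos hb).ne',
    ← Real.sqrt_sq hp.le, ← Real.sqrt_div' _ (sq_nonneg _), Real.sqrt_sq hp.le]
  congr 1
  field_simp

lemma munum_two_mul (μ : ℝ) (k : ℕ) : munum μ (2 * k) = 2 * k := by
  simp [munum, pow_mul]

lemma munum_two_mul_add_one (μ : ℝ) (k : ℕ) : munum μ (2 * k + 1) = 2 * k + 1 + 2 * μ := by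
  rw [munum, pow_succ, pow_mul]
  push_cast
  ring

lemma mufact_succ (μ : ℝ) (n : ℕ) : mufact μ (n + 1) = mufact μ n * munum μ (n + 1) :=
  Finset.prod_range_succ _ n

lemma mufact_two_mul (μ : ℝ) (m : ℕ) :
    mufact μ (2 * m) = 4 ^ m * (m.factorial * poch (μ + 1/2) m) := by
  induction m with
  | zero => simp [mufact, poch]
  | succ m ih =>
    rw [show 2 * (m + 1) = 2 * m + 1 + 1 by ring, mufact_succ, mufact_succ, ih,
      munum_two_mul_add_one, show 2 * m + 1 + 1 = 2 * (m + 1) by ring, munum_two_mul,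
      poch_succ, Nat.factorial_succ]
    push_cast
    ring

lemma mufact_two_mul_add_one (μ : ℝ) (m : ℕ) :
    mufact μ (2 * m + 1) = (2 * μ + 1) * (4 ^ m * (m.factorial * poch (μ + 3/2) m)) := by
  have hshift : poch (μ + 1/2) m * (μ + 1/2 + m) = (μ + 1/2) * poch (μ + 3/2) m := by
    rw [← poch_succ, poch_succ_left]
    norm_num [add_assoc]
  rw [mufact_succ, mufact_two_mul, munum_two_mul_add_one]
  linear_combination (2 * (4 : ℝ) ^ m * m.factorial) * hshift

lemma sqrt_four_pow_mul (m : ℕ) (a : ℝ) : √(4 ^ m * a) = 2 ^ m * √a := by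
  rw [Real.sqrt_mul (by positivity), show (4 : ℝ) ^ m = (2 ^ m) ^ 2 by
    rw [← pow_mul, mul_comm, pow_mul]; norm_num, Real.sqrt_sq (by positivity)]

lemma sqrt_mufact_two_mul (μ : ℝ) (m : ℕ) :
    √(mufact μ (2 * m)) = 2 ^ m * √(m.factorial * poch (μ + 1/2) m) := by
  rw [mufact_two_mul, sqrt_four_pow_mul]

lemma sqrt_mufact_two_mul_add_one {μ : ℝ} (hμ : 0 ≤ 2 * μ + 1) (m : ℕ) :
    √(mufact μ (2 * m + 1))
      = √(2 * μ + 1) * (2 ^ m * √(m.factorial * poch (μ + 3/2) m)) := by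
  rw [mufact_two_mul_add_one, Real.sqrt_mul hμ, sqrt_four_pow_mul]

lemma summable_norm_hyp0F1_term {b : ℝ} (hb : 0 < b) (x : ℝ) :
    Summable fun k : ℕ => ‖x ^ k / (poch b k * k.factorial)‖ := by
  refine .of_nonneg_of_le (fun k => norm_nonneg _) (fun k => ?_)
    ((Real.summable_pow_div_factorial |x|).mul_left (min b 1)⁻¹)
  have hk : (0 : ℝ) < k.factorial := by positivity
  rw [Real.norm_eq_abs, abs_div, abs_pow, abs_of_pos (mul_pos (poch_pos hb k) hk),
    ← div_div, inv_mul_eq_div, div_right_comm]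
  have := min_one_le_poch hb k
  gcongr

lemma pow_mul_laguerre_div_poch {b : ℝ} (hb : 0 < b) (x t : ℝ) (m : ℕ) :
    t ^ m * laguerre (b - 1) m x / poch b m
      = ∑ k ∈ Finset.range (m + 1),
          (-(x * t)) ^ k / (poch b k * k.factorial) * (t ^ (m - k) / (m - k).factorial) := by
  rw [laguerre, sub_add_cancel, Finset.mul_sum, Finset.mul_sum, Finset.sum_div]
  refine Finset.sum_congr rfl fun k hk => ?_
  obtain ⟨j, rfl⟩ := Nat.exists_eq_add_of_le (Nat.lt_succ_iff.mp (Finset.mem_range.mp hk))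
  have hpoch : poch (-((k + j : ℕ) : ℝ)) k = (-1) ^ k * (k + j).factorial / j.factorial :=
    eq_div_of_mul_eq (by positivity)
      (by simpa using poch_neg_natCast_mul_factorial (k.le_add_right j))
  have hpm := (poch_pos hb (k + j)).ne'
  have hpk := (poch_pos hb k).ne'
  rw [hpoch, Nat.add_sub_cancel_left]
  field_simp
  ring

lemma laguerre_generating_function {b : ℝ} (hb : 0 < b) (x t : ℝ) :
    (Summable fun m : ℕ => |t ^ m * laguerre (b - 1) m x / poch b m|) ∧
      ∑' m : ℕ, t ^ m * laguerre (b - 1) m x / poch b m = Real.exp t * hyp0F1 b (-(x * t)) := by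
  have hexp : Summable fun j : ℕ => ‖t ^ j / j.factorial‖ := by
    simpa [abs_div] using Real.summable_pow_div_factorial |t|
  have hF := summable_norm_hyp0F1_term hb (-(x * t))
  have hterm := pow_mul_laguerre_div_poch hb x t
  refine ⟨?_, ?_⟩
  · simpa only [hterm, ← Real.norm_eq_abs] using
      summable_norm_sum_mul_range_of_summable_norm hF hexp
  rw [tsum_congr hterm, ← tsum_mul_tsum_eq_tsum_sum_range_of_summable_norm hF hexp, hyp0F1,
    mul_comm, Real.exp_eq_exp_ℝ, NormedSpace.exp_eq_tsum_div]

lemma neg_sq_div_two_pow (z : ℝ) (m : ℕ) :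
    (-z ^ 2 / 2) ^ m = (-1) ^ m * z ^ (2 * m) / 2 ^ m := by
  rw [div_pow, neg_pow, pow_mul]

lemma chihara_even_term {μ : ℝ} (hμ : -1/2 < μ) (γ lam z : ℝ) (m : ℕ) :
    P μ γ (2 * m) lam * z ^ (2 * m) / √(mufact μ (2 * m))
      = (-z ^ 2 / 2) ^ m * laguerre (μ + 1/2 - 1) m ((lam ^ 2 - γ ^ 2) / 2)
          / poch (μ + 1/2) m := by
  have hb : 0 < μ + 1/2 := by linarith
  have hp := poch_pos hb m
  have hs : 0 < √(m.factorial * poch (μ + 1/2) m) := by positivity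
  simp only [P, Nat.mul_mod_right, Nat.mul_div_cancel_left m two_pos, if_true]
  rw [show (m : ℝ) + μ + 1/2 = m + (μ + 1/2) by ring, sqrt_factorial_mul_Gamma_div hb,
    sqrt_mufact_two_mul, show μ + 1/2 - 1 = μ - 1/2 by ring, neg_sq_div_two_pow]
  generalize √(m.factorial * poch (μ + 1/2) m) = s at hs ⊢
  generalize poch (μ + 1/2) m = p at hp ⊢
  field_simp

lemma chihara_odd_term {μ : ℝ} (hμ : -1/2 < μ) (γ lam z : ℝ) (m : ℕ) :
    P μ γ (2 * m + 1) lam * z ^ (2 * m + 1) / √(mufact μ (2 * m + 1))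
      = z * (lam - γ) / (2 * μ + 1) *
          ((-z ^ 2 / 2) ^ m * laguerre (μ + 3/2 - 1) m ((lam ^ 2 - γ ^ 2) / 2)
            / poch (μ + 3/2) m) := by
  have hb : 0 < μ + 3/2 := by linarith
  have hμ' : 0 < 2 * μ + 1 := by linarith
  have hp := poch_pos hb m
  have hs : 0 < √(m.factorial * poch (μ + 3/2) m) := by positivity
  have hr : 0 < √(2 * μ + 1) := Real.sqrt_pos.2 hμ'
  have hr2 : √(2 * μ + 1) ^ 2 = 2 * μ + 1 := Real.sq_sqrt hμ'.le
  simp only [P, show (2 * m + 1) % 2 = 1 by omega, show (2 * m + 1) / 2 = m by omega]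
  rw [if_neg one_ne_zero, show (m : ℝ) + μ + 3/2 = m + (μ + 3/2) by ring,
    sqrt_factorial_mul_Gamma_div hb, sqrt_mufact_two_mul_add_one hμ'.le,
    show μ + 3/2 - 1 = μ + 1/2 by ring, neg_sq_div_two_pow]
  generalize √(m.factorial * poch (μ + 3/2) m) = s at hs ⊢
  generalize poch (μ + 3/2) m = p at hp ⊢
  generalize √(2 * μ + 1) = r at hr hr2 ⊢
  rw [← hr2]
  field_simp
  ring

lemma summable_abs_and_tsum_eq_of_even_odd {f a b : ℕ → ℝ} (c : ℝ)
    (ha : Summable fun m => |a m|) (hb : Summable fun m => |b m|)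
    (heven : ∀ m, f (2 * m) = a m) (hodd : ∀ m, f (2 * m + 1) = c * b m) :
    (Summable fun n => |f n|) ∧ ∑' n, f n = ∑' m, a m + c * ∑' m, b m := by
  have hfe : Summable fun m => |f (2 * m)| := ha.congr fun m => by rw [heven]
  have hfo : Summable fun m => |f (2 * m + 1)| :=
    (hb.mul_left |c|).congr fun m => by rw [hodd, abs_mul]
  refine ⟨hfe.even_add_odd hfo, ?_⟩
  rw [← tsum_even_add_odd hfe.of_abs hfo.of_abs, tsum_congr heven, tsum_congr hodd, tsum_mul_left]

/-- generating function for the Specialized Chihara polynomials. -/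
theorem chihara_generating_function (μ γ lam z : ℝ) (hμ : 0 < μ) :
    Summable (fun n : ℕ => |P μ γ n lam * z ^ n / Real.sqrt (mufact μ n)|) ∧
    ∑' n : ℕ, P μ γ n lam * z ^ n / Real.sqrt (mufact μ n)
      = Real.exp (-z ^ 2 / 2) *
        (hyp0F1 (μ + 1/2) (z ^ 2 * (lam ^ 2 - γ ^ 2) / 4)
          + (z * (lam - γ) / (2 * μ + 1)) * hyp0F1 (μ + 3/2) (z ^ 2 * (lam ^ 2 - γ ^ 2) / 4)) := by
  have hμ' : -1/2 < μ := by linarith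
  obtain ⟨hs₀, hgen₀⟩ := laguerre_generating_function (by linarith : 0 < μ + 1/2)
    ((lam ^ 2 - γ ^ 2) / 2) (-z ^ 2 / 2)
  obtain ⟨hs₁, hgen₁⟩ := laguerre_generating_function (by linarith : 0 < μ + 3/2)
    ((lam ^ 2 - γ ^ 2) / 2) (-z ^ 2 / 2)
  obtain ⟨hsum, htsum⟩ := summable_abs_and_tsum_eq_of_even_odd
    (f := fun n => P μ γ n lam * z ^ n / √(mufact μ n)) _ hs₀ hs₁
    (chihara_even_term hμ' γ lam z) (chihara_odd_term hμ' γ lam z)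
  refine ⟨hsum, htsum.trans ?_⟩
  rw [hgen₀, hgen₁,
    show -((lam ^ 2 - γ ^ 2) / 2 * (-z ^ 2 / 2)) = z ^ 2 * (lam ^ 2 - γ ^ 2) / 4 by ring]
  ring

end MinusOne
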